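/- For k ∈ ℕ and a smooth function f : ℝ → ℝ, let ⟨f⟩_k be the symmetrized differential operator acting on smooth u : ℝ → ℝ by ⟨f⟩_k u = (1/2)(f · u^{(k)} + (f·u)^{(k)}). Then for all smooth f, g, u : ℝ → ℝ, the commutator identity [⟨f⟩₄, ⟨g⟩₀] u = 4 ⟨f·g'⟩₃ u - 2 ⟨3f'·g'' + f·g'''⟩₁ u holds pointwise. -/

import Mathlib

open scoped ContDiff
open Finset

private lemma sd {f : ℝ → ℝ} (hf : ContDiff ℝ ∞ f) : ContDiff ℝ ∞ (deriv f) :=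
  (contDiff_infty_iff_deriv.mp hf).2

private lemma cdn {f : ℝ → ℝ} (hf : ContDiff ℝ ∞ f) (n : ℕ) : ContDiffOn ℝ n f Set.univ :=
  (hf.of_le (by exact_mod_cast le_top)).contDiffOn

private lemma iadd (n : ℕ) (a b : ℝ → ℝ) (ha : ContDiff ℝ ∞ a) (hb : ContDiff ℝ ∞ b) (x : ℝ) :
    iteratedDeriv n (fun y => a y + b y) x = iteratedDeriv n a x + iteratedDeriv n b x := by
  simp only [← iteratedDerivWithin_univ]
  exact iteratedDerivWithin_add (Set.mem_univ x) uniqueDiffOn_univ (cdn ha n x (Set.mem_univ x)) (cdn hb n x (Set.mem_univ x))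

private lemma iconst (n : ℕ) (c : ℝ) (v : ℝ → ℝ) (hv : ContDiff ℝ ∞ v) (x : ℝ) :
    iteratedDeriv n (fun y => c * v y) x = c * iteratedDeriv n v x := by
  simp only [← iteratedDerivWithin_univ]
  exact iteratedDerivWithin_const_mul (Set.mem_univ x) uniqueDiffOn_univ c (cdn hv n x (Set.mem_univ x))

private lemma ismooth (k : ℕ) {v : ℝ → ℝ} (hv : ContDiff ℝ ∞ v) :
    ContDiff ℝ ∞ (iteratedDeriv k v) := by
  rw [iteratedDeriv_eq_iterate]; exact hv.iterate_deriv k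

private lemma iter_iter (m k : ℕ) (v : ℝ → ℝ) :
    iteratedDeriv m (iteratedDeriv k v) = iteratedDeriv (m + k) v := by
  simp only [iteratedDeriv_eq_iterate]
  exact (Function.iterate_add_apply deriv m k v).symm

private lemma sum_id (n : ℕ) (A B : ℕ → ℝ) :
    (∑ i ∈ range (n+1), (n.choose i : ℝ) * (A (i+1) * B (n-i))) +
      (∑ i ∈ range (n+1), (n.choose i : ℝ) * (A i * B (n-i+1))) =
      ∑ i ∈ range (n+2), ((n+1).choose i : ℝ) * (A i * B (n+1-i)) := by
  have h2 : (∑ i ∈ range (n+1), (n.choose i : ℝ) * (A i * B (n-i+1)))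
      = (∑ i ∈ range n, (n.choose (i+1) : ℝ) * (A (i+1) * B (n-i))) + A 0 * B (n+1) := by
    rw [Finset.sum_range_succ' (fun i => (n.choose i : ℝ) * (A i * B (n-i+1))) n]
    simp only [Nat.choose_zero_right, Nat.cast_one, Nat.sub_zero, one_mul]
    congr 1
    exact Finset.sum_congr rfl fun i hi => by
      have := Finset.mem_range.mp hi
      rw [show n - (i+1) + 1 = n - i from by omega]
  conv_rhs => rw [Finset.sum_range_succ' (fun i => (((n+1).choose i : ℕ) : ℝ) * (A i * B (n+1-i))) (n+1)]
  simp only [Nat.choose_succ_succ, Nat.cast_add, Nat.choose_zero_right, Nat.cast_one,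
    Nat.succ_sub_succ, Nat.sub_zero, one_mul, add_mul]
  rw [Finset.sum_add_distrib, h2]
  have h3 : (∑ i ∈ range (n+1), (n.choose (i+1) : ℝ) * (A (i+1) * B (n-i)))
      = ∑ i ∈ range n, (n.choose (i+1) : ℝ) * (A (i+1) * B (n-i)) := by
    rw [Finset.sum_range_succ, Nat.choose_succ_self]
    simp
  rw [h3]
  ring

private lemma leibniz : ∀ (n : ℕ) (a b : ℝ → ℝ), ContDiff ℝ ∞ a → ContDiff ℝ ∞ b → ∀ x : ℝ,
    iteratedDeriv n (fun y => a y * b y) x =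
      ∑ i ∈ range (n+1), (n.choose i : ℝ) * (iteratedDeriv i a x * iteratedDeriv (n-i) b x) := by
  intro n
  induction n with
  | zero => intro a b _ _ x; simp
  | succ n ih =>
    intro a b ha hb x
    have hda : Differentiable ℝ a := ha.differentiable (by simp)
    have hdb : Differentiable ℝ b := hb.differentiable (by simp)
    have hd : deriv (fun y => a y * b y) = fun y => deriv a y * b y + a y * deriv b y :=
      funext fun y => deriv_mul (hda y) (hdb y)
    rw [iteratedDeriv_succ', hd,
      iadd n _ _ ((sd ha).mul hb) (ha.mul (sd hb)) x,
      ih _ _ (sd ha) hb x, ih _ _ ha (sd hb) x]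
    simp only [← iteratedDeriv_succ']
    exact sum_id n (fun i => iteratedDeriv i a x) (fun j => iteratedDeriv j b x)



/-- The symmetrized differential operator `⟨f⟩_k u = (1/2)(f·u^{(k)} + (f·u)^{(k)})`. -/
noncomputable def ang (f : ℝ → ℝ) (k : ℕ) (u : ℝ → ℝ) : ℝ → ℝ :=
  fun x => (1 / 2) * (f x * iteratedDeriv k u x + iteratedDeriv k (fun y => f y * u y) x)

/-- `[⟨f⟩₄, ⟨g⟩₀] u = 4⟨f·g'⟩₃ u - 2⟨3f'·g'' + f·g'''⟩₁ u`
pointwise, for smooth `f g u`. -/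
theorem comm_ang4_ang0 (f g u : ℝ → ℝ)
    (hf : ContDiff ℝ (⊤ : ℕ∞) f) (hg : ContDiff ℝ (⊤ : ℕ∞) g) (hu : ContDiff ℝ (⊤ : ℕ∞) u) (x : ℝ) :
    ang f 4 (ang g 0 u) x - ang g 0 (ang f 4 u) x =
      4 * ang (fun y => f y * deriv g y) 3 u x -
        2 * ang (fun y => 3 * deriv f y * iteratedDeriv 2 g y +
          f y * iteratedDeriv 3 g y) 1 u x := by
  have hf' : ContDiff ℝ ∞ f := hf.of_le (by simp)
  have hg' : ContDiff ℝ ∞ g := hg.of_le (by simp)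
  have hu' : ContDiff ℝ ∞ u := hu.of_le (by simp)
  have hgu' : ContDiff ℝ ∞ (fun y => g y * u y) := hg'.mul hu'
  have hfg1 : ContDiff ℝ ∞ (fun y => f y * iteratedDeriv 1 g y) := hf'.mul (ismooth 1 hg')
  have hbr : ContDiff ℝ ∞ (fun y => 3 * iteratedDeriv 1 f y * iteratedDeriv 2 g y +
      f y * iteratedDeriv 3 g y) :=
    ((contDiff_const.mul (ismooth 1 hf')).mul (ismooth 2 hg')).add (hf'.mul (ismooth 3 hg'))
  have h0 : ∀ v : ℝ → ℝ, ang g 0 v = fun y => g y * v y := by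
    intro v; funext y; simp [ang]; ring
  simp only [h0]
  simp only [ang, iteratedDeriv_zero, ← iteratedDeriv_one]
  have E1 : iteratedDeriv 4 (fun y => g y * u y) x =
      ∑ i ∈ Finset.range (4+1), ((4:ℕ).choose i : ℝ) *
        (iteratedDeriv i g x * iteratedDeriv (4-i) u x) := leibniz 4 g u hg' hu' x
  have E2 : iteratedDeriv 4 (fun y => f y * (g y * u y)) x =
      ∑ i ∈ Finset.range (4+1), ((4:ℕ).choose i : ℝ) *
        (iteratedDeriv i f x * iteratedDeriv (4-i) (fun y => g y * u y) x) :=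
    leibniz 4 f _ hf' hgu' x
  have E3 : iteratedDeriv 4 (fun y => f y * u y) x =
      ∑ i ∈ Finset.range (4+1), ((4:ℕ).choose i : ℝ) *
        (iteratedDeriv i f x * iteratedDeriv (4-i) u x) := leibniz 4 f u hf' hu' x
  have E4 : iteratedDeriv 3 (fun y => f y * iteratedDeriv 1 g y * u y) x =
      ∑ i ∈ Finset.range (3+1), ((3:ℕ).choose i : ℝ) *
        (iteratedDeriv i (fun y => f y * iteratedDeriv 1 g y) x * iteratedDeriv (3-i) u x) :=
    leibniz 3 _ u hfg1 hu' x
  have E5 : iteratedDeriv 1 (fun y => (3 * iteratedDeriv 1 f y * iteratedDeriv 2 g y +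
        f y * iteratedDeriv 3 g y) * u y) x =
      ∑ i ∈ Finset.range (1+1), ((1:ℕ).choose i : ℝ) *
        (iteratedDeriv i (fun y => 3 * iteratedDeriv 1 f y * iteratedDeriv 2 g y +
          f y * iteratedDeriv 3 g y) x * iteratedDeriv (1-i) u x) :=
    leibniz 1 _ u hbr hu' x
  have G : ∀ k : ℕ, iteratedDeriv k (fun y => g y * u y) x =
      ∑ i ∈ Finset.range (k+1), (k.choose i : ℝ) *
        (iteratedDeriv i g x * iteratedDeriv (k-i) u x) := fun k => leibniz k g u hg' hu' x
  have FG : ∀ k : ℕ, iteratedDeriv k (fun y => f y * iteratedDeriv 1 g y) x =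
      ∑ i ∈ Finset.range (k+1), (k.choose i : ℝ) *
        (iteratedDeriv i f x * iteratedDeriv (k-i) (iteratedDeriv 1 g) x) :=
    fun k => leibniz k f _ hf' (ismooth 1 hg') x
  have Ba : iteratedDeriv 1 (fun y => 3 * iteratedDeriv 1 f y * iteratedDeriv 2 g y +
        f y * iteratedDeriv 3 g y) x =
      iteratedDeriv 1 (fun y => 3 * iteratedDeriv 1 f y * iteratedDeriv 2 g y) x +
        iteratedDeriv 1 (fun y => f y * iteratedDeriv 3 g y) x :=
    iadd 1 _ _ ((contDiff_const.mul (ismooth 1 hf')).mul (ismooth 2 hg'))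
      (hf'.mul (ismooth 3 hg')) x
  have Bb : iteratedDeriv 1 (fun y => 3 * iteratedDeriv 1 f y * iteratedDeriv 2 g y) x =
      3 * iteratedDeriv 1 (fun y => iteratedDeriv 1 f y * iteratedDeriv 2 g y) x := by
    have h : (fun y => 3 * iteratedDeriv 1 f y * iteratedDeriv 2 g y) =
        fun y => 3 * (iteratedDeriv 1 f y * iteratedDeriv 2 g y) := by funext y; ring
    rw [h]; exact iconst 1 3 _ ((ismooth 1 hf').mul (ismooth 2 hg')) x
  have Bc : iteratedDeriv 1 (fun y => iteratedDeriv 1 f y * iteratedDeriv 2 g y) x =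
      ∑ i ∈ Finset.range (1+1), ((1:ℕ).choose i : ℝ) *
        (iteratedDeriv i (iteratedDeriv 1 f) x * iteratedDeriv (1-i) (iteratedDeriv 2 g) x) :=
    leibniz 1 _ _ (ismooth 1 hf') (ismooth 2 hg') x
  have Bd : iteratedDeriv 1 (fun y => f y * iteratedDeriv 3 g y) x =
      ∑ i ∈ Finset.range (1+1), ((1:ℕ).choose i : ℝ) *
        (iteratedDeriv i f x * iteratedDeriv (1-i) (iteratedDeriv 3 g) x) :=
    leibniz 1 _ _ hf' (ismooth 3 hg') x
  simp only [E1, E2, E3, E4, E5]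
  simp [Finset.sum_range_succ, Nat.choose]
  simp only [← iteratedDeriv_one, G, FG, Ba, Bb, Bc, Bd]
  simp [Finset.sum_range_succ, Nat.choose, iter_iter]
  simp only [← iteratedDeriv_one]
  simp only [iter_iter]
  ring
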